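/- The isomorphism class of the Yamada cochain complex C_Y(G) is independent of the chosen ordering of the edges of G: if σ is a permutation of the edge labels, then the map f: C^i(G) → C^i(G_σ) defined on the summand indexed by S ⊆ E with |S| = i as −id if (for σ a transposition (k,k+1)) both edges e_k and e_{k+1} lie in S, and id otherwise, is an isomorphism of cochain complexes. -/

import Mathlib

/-- A finite multigraph (loops and parallel edges allowed), with a chosen
orientation of each edge given by source and target maps. -/
structure Multigraph where
  V : Type
  E : Type
  [fintypeV : Fintype V]
  [fintypeE : Fintype E]
  [decEqV : DecidableEq V]
  [decEqE : DecidableEq E]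
  src : E → V
  tgt : E → V

attribute [instance] Multigraph.fintypeV Multigraph.fintypeE
  Multigraph.decEqV Multigraph.decEqE

namespace Multigraph

variable (G : Multigraph)

/-- Two vertices are directly joined by an edge of the spanning subgraph `[G:S]`. -/
def connRel (S : Finset G.E) (a b : G.V) : Prop :=
  ∃ e ∈ S, (G.src e = a ∧ G.tgt e = b)

/-- The "same connected component of `[G:S]`" equivalence relation. -/
def connSetoid (S : Finset G.E) : Setoid G.V := Relation.EqvGen.setoid (G.connRel S)

/-- The set of connected components of the spanning subgraph `[G:S]`. -/
def Comp (S : Finset G.E) : Type := Quotient (G.connSetoid S)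

noncomputable instance (S : Finset G.E) : Fintype (G.Comp S) := by
  classical exact Quotient.fintype _

noncomputable instance (S : Finset G.E) : DecidableEq (G.Comp S) :=
  Classical.decEq _

/-- `b₀([G:S])`: the number of connected components of the spanning subgraph `[G:S]`. -/
noncomputable def b0 (S : Finset G.E) : ℕ := Fintype.card (G.Comp S)

/-- The simplicial boundary map `ℚ^S → ℚ^V`, sending an edge to (target − source). -/
noncomputable def boundary (S : Finset G.E) : ((↥S) → ℚ) →ₗ[ℚ] (G.V → ℚ) :=
  ∑ e : ↥S, LinearMap.smulRight (LinearMap.proj e)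
    (fun v => (if G.tgt e.1 = v then (1 : ℚ) else 0) - (if G.src e.1 = v then 1 else 0))

/-- `b₁([G:S])`: the first Betti number of `[G:S]`, i.e. the rank of its cycle space. -/
noncomputable def b1 (S : Finset G.E) : ℕ :=
  Module.finrank ℚ (LinearMap.ker (G.boundary S))

end Multigraph

/-- The pushforward of free `ℤ`-modules along a partially defined map of bases:
a basis element `a` is sent to `g a` if defined, and to `0` otherwise. -/
noncomputable def pushMap {α β : Type*} [Fintype α] [DecidableEq β]
    (g : α → Option β) : (α → ℤ) →ₗ[ℤ] (β → ℤ) where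
  toFun φ b := ∑ a : α, if g a = some b then φ a else 0
  map_add' φ ψ := by
    funext b
    simp only [Pi.add_apply]
    rw [← Finset.sum_add_distrib]
    refine Finset.sum_congr rfl fun a _ => ?_
    by_cases h : g a = some b <;> simp [h]
  map_smul' c φ := by
    funext b
    rw [RingHom.id_apply, Pi.smul_apply, smul_eq_mul, Finset.mul_sum]
    refine Finset.sum_congr rfl fun a _ => ?_
    by_cases h : g a = some b <;> simp [h]

namespace Multigraph

variable (G : Multigraph)

/-- The standard `ℤ`-basis of `C^S(G) = A^{⊗|S|} ⊗ A^{⊗b₀([G:S])} ⊗ B^{⊗b₁([G:S])}`,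
where `A = ℤ[t]/(t²)` and `B = ℤ[w]/(w²)`:  a factor of `A` (basis `{1, t}`) for
each edge of `S` and each component of `[G:S]`, and a factor of `B` (basis
`{1, w}`) for each of the `b₁([G:S])` independent cycles.  `false` encodes
`1` and `true` encodes `t` (resp. `w`). -/
abbrev YBasis (S : Finset G.E) : Type :=
  (↥S → Bool) × (G.Comp S → Bool) × (Fin (G.b1 S) → Bool)

/-- The chain module `C^S(G)`, the free `ℤ`-module on `YBasis G S`. -/
abbrev Cmod (S : Finset G.E) : Type := G.YBasis S → ℤ

/-- The natural map on components induced by `T.erase e ⊆ T`. -/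
def compPush (T : Finset G.E) (e : G.E) : G.Comp (T.erase e) → G.Comp T :=
  Quotient.map id (by
    intro a b hab
    refine Relation.EqvGen.mono ?_ a b hab
    rintro x y ⟨e', he', hx, hy⟩
    exact ⟨e', Finset.mem_of_mem_erase he', hx, hy⟩)

/-- Multiplication `A ⊗ A → A` along a merging of components, as a partially
defined map of bases: the result is undefined (`0`) when two merged components
both carry `t` (since `t² = 0`), and otherwise the resulting component carries
`t` iff some preimage component does. -/
noncomputable def mergeMap (T : Finset G.E) (e : G.E)
    (b : G.Comp (T.erase e) → Bool) : Option (G.Comp T → Bool) :=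
  if ∃ c c' : G.Comp (T.erase e),
      c ≠ c' ∧ G.compPush T e c = G.compPush T e c' ∧ b c ∧ b c' then
    none
  else
    some fun d => decide (∃ c, G.compPush T e c = d ∧ b c)

/-- Inserting the unit `1 ∈ A` in the tensor factor of the new edge `e`. -/
def edgeExt (T : Finset G.E) (e : G.E) (a : ↥(T.erase e) → Bool) : ↥T → Bool :=
  fun x => if hx : x.1 = e then false
    else a ⟨x.1, Finset.mem_erase.mpr ⟨hx, x.2⟩⟩

/-- The map `B^{⊗ν₀} → B^{⊗ν₁}` on bases: the identity when `ν₁ = ν₀`, and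
appending a unit `1 ∈ B` in a new last factor when `ν₁ = ν₀ + 1`. -/
def cycExt (ν₀ ν₁ : ℕ) (c : Fin ν₀ → Bool) : Fin ν₁ → Bool :=
  fun i => if h : (i : ℕ) < ν₀ then c ⟨i, h⟩ else false

/-- The per-edge map `d_ξ` on bases, for the cube edge `ξ` joining
`S₀ = T.erase e` to `S₁ = T`. -/
noncomputable def basisStep (T : Finset G.E) (e : G.E) :
    G.YBasis (T.erase e) → Option (G.YBasis T) :=
  fun v => (G.mergeMap T e v.2.1).map
    (fun b' => (G.edgeExt T e v.1, b', cycExt (G.b1 (T.erase e)) (G.b1 T) v.2.2))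

/-- The per-edge map `d_ξ : C^{T∖e}(G) → C^T(G)`. -/
noncomputable def stepMap (T : Finset G.E) (e : G.E) :
    G.Cmod (T.erase e) →ₗ[ℤ] G.Cmod T :=
  pushMap (G.basisStep T e)

/-- The `i`-th chain module `C^i(G) = ⊕_{|S| = i} C^S(G)`. -/
abbrev Cchain (i : ℕ) : Type :=
  (S : {S : Finset G.E // S.card = i}) → G.Cmod S.1

/-- The differential `d^i : C^i(G) → C^{i+1}(G)`, where the edge ordering is
given by an injective labelling `π : E → ℕ`;  the per-edge map for adding the
edge `e` to `S₀` enters with the sign `(−1)^{#{x ∈ S₀ : π x < π e}}`. -/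
noncomputable def diff (π : G.E → ℕ) (i : ℕ) :
    G.Cchain i →ₗ[ℤ] G.Cchain (i + 1) :=
  LinearMap.pi fun T =>
    ∑ e ∈ T.1.attach,
      ((-1 : ℤ) ^ (((T.1.erase e.1).filter (fun x => π x < π e.1)).card)) •
        ((G.stepMap T.1 e.1).comp
          (LinearMap.proj
            (⟨T.1.erase e.1, by
              simp [Finset.card_erase_of_mem e.2, T.2]⟩ :
              {S : Finset G.E // S.card = i})))

end Multigraph

namespace Multigraph

open Classical in
/-- The comparison map `f : C^i(G) → C^i(G_σ)` for the adjacent transposition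
`σ = (k, k+1)` of edge labels: on the summand indexed by `S` it is `−id` when
both edges labelled `k` and `k+1` belong to `S`, and `id` otherwise. -/
noncomputable def relabelMap (G : Multigraph) (π : G.E → ℕ) (k : ℕ) (i : ℕ) :
    G.Cchain i →ₗ[ℤ] G.Cchain i :=
  LinearMap.pi fun T =>
    (if (∃ e ∈ T.1, π e = k) ∧ (∃ e ∈ T.1, π e = k + 1) then (-1 : ℤ) else 1) •
      LinearMap.proj T

end Multigraph

/-!
The comparison map is an involution, so only the commutation with the differentials needs
an argument, and it is a sign identity that depends on a summand `T` only through its label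
set `L = π(T)`. Adding the edge labelled `a` flips the sign of the comparison map exactly when
the swap partner `σ a ≠ a` of `a` already lies in `L`; and since `σ = (k, k+1)` preserves the
order of every pair of labels except `{k, k+1}`, this is also exactly when the differential's
sign `(-1)^#{n ∈ L | n < a}` changes under relabelling.
-/

open Finset

def pairSign (k : ℕ) (L : Finset ℕ) : ℤ := if k ∈ L ∧ k + 1 ∈ L then -1 else 1

theorem neg_one_pow_card_filter_eq_prod {α : Type*} (s : Finset α) (p : α → Prop)
    [DecidablePred p] :
    (-1 : ℤ) ^ #{x ∈ s | p x} = ∏ x ∈ s, if p x then -1 else 1 := by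
  rw [← prod_const, prod_filter]

theorem sign_swap_lt_swap (k n a : ℕ) :
    (if Equiv.swap k (k + 1) n < Equiv.swap k (k + 1) a then (-1 : ℤ) else 1) =
      (if n = Equiv.swap k (k + 1) a ∧ n ≠ a then -1 else 1) * if n < a then -1 else 1 := by
  simp only [Equiv.swap_apply_def]
  split_ifs <;> omega

theorem neg_one_pow_card_filter_swap_lt (k a : ℕ) (L : Finset ℕ) :
    (-1 : ℤ) ^ #{n ∈ L | Equiv.swap k (k + 1) n < Equiv.swap k (k + 1) a} =
      (if Equiv.swap k (k + 1) a ∈ L ∧ Equiv.swap k (k + 1) a ≠ a then -1 else 1) *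
        (-1) ^ #{n ∈ L | n < a} := by
  simp only [neg_one_pow_card_filter_eq_prod, sign_swap_lt_swap, prod_mul_distrib]
  rw [prod_ite_one _ _ fun _ _ _ _ hm hn => hm.1.trans hn.1.symm]
  simp

theorem pairSign_eq_mul_pairSign_erase (k : ℕ) {a : ℕ} {L : Finset ℕ} (ha : a ∈ L) :
    pairSign k L =
      (if Equiv.swap k (k + 1) a ∈ L ∧ Equiv.swap k (k + 1) a ≠ a then -1 else 1) *
        pairSign k (L.erase a) := by
  simp only [pairSign, mem_erase, Equiv.swap_apply_def]
  split_ifs <;> grind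

theorem pairSign_mul_neg_one_pow (k : ℕ) {a : ℕ} {L : Finset ℕ} (ha : a ∈ L) :
    pairSign k L * (-1) ^ #{n ∈ L | n < a} =
      (-1) ^ #{n ∈ L | Equiv.swap k (k + 1) n < Equiv.swap k (k + 1) a} *
        pairSign k (L.erase a) := by
  rw [pairSign_eq_mul_pairSign_erase k ha, neg_one_pow_card_filter_swap_lt]
  ring

theorem card_filter_erase_eq_card_filter_image {α : Type*} [DecidableEq α] {π : α → ℕ}
    (hπ : Function.Injective π) {T : Finset α} {e : α} (r : ℕ → Prop) [DecidablePred r]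
    (hr : ¬ r (π e)) :
    #{x ∈ T.erase e | r (π x)} = #{n ∈ T.image π | r n} := by
  rw [filter_erase, erase_eq_of_notMem (by simp [hr]), filter_image,
    card_image_of_injective _ hπ]

theorem pairSign_image_mul_neg_one_pow {α : Type*} [DecidableEq α] {π : α → ℕ}
    (hπ : Function.Injective π) (k : ℕ) {T : Finset α} {e : α} (he : e ∈ T) :
    pairSign k (T.image π) * (-1) ^ #{x ∈ T.erase e | π x < π e} =
      (-1) ^ #{x ∈ T.erase e | Equiv.swap k (k + 1) (π x) < Equiv.swap k (k + 1) (π e)} *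
        pairSign k ((T.erase e).image π) := by
  rw [image_erase hπ, card_filter_erase_eq_card_filter_image hπ (· < π e) (lt_irrefl _),
    card_filter_erase_eq_card_filter_image hπ
      (Equiv.swap k (k + 1) · < Equiv.swap k (k + 1) (π e)) (lt_irrefl _)]
  exact pairSign_mul_neg_one_pow k (mem_image_of_mem π he)

namespace Multigraph

variable (G : Multigraph) (π : G.E → ℕ) (k i : ℕ)

theorem relabelMap_apply (φ : G.Cchain i) (T : {S : Finset G.E // S.card = i}) :
    G.relabelMap π k i φ T = pairSign k (T.1.image π) • φ T := by
  simp only [relabelMap, pairSign, mem_image, LinearMap.pi_apply, LinearMap.smul_apply,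
    LinearMap.proj_apply]

theorem relabelMap_relabelMap (φ : G.Cchain i) :
    G.relabelMap π k i (G.relabelMap π k i φ) = φ := by
  funext T
  simp only [relabelMap_apply, smul_smul, pairSign]
  split_ifs <;> simp

end Multigraph

open Multigraph in
/-- The Yamada complex does not depend on the ordering of the edges: for the
relabelling `π' = (k, k+1) ∘ π` by an adjacent transposition, the map
`f : C^i(G) → C^i(G_σ)` from `relabelMap` is an isomorphism of cochain
complexes (it is bijective and commutes with the differentials). -/
theorem relabelMap_iso (G : Multigraph) (π : G.E → ℕ) (hπ : Function.Injective π)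
    (k : ℕ) (π' : G.E → ℕ) (hπ' : π' = (Equiv.swap k (k + 1)) ∘ π) (i : ℕ) :
    Function.Bijective (G.relabelMap π k i) ∧
      (G.relabelMap π k (i + 1)).comp (G.diff π i) =
        (G.diff π' i).comp (G.relabelMap π k i) := by
  subst hπ'
  refine ⟨Function.bijective_iff_has_inverse.mpr
    ⟨_, G.relabelMap_relabelMap π k i, G.relabelMap_relabelMap π k i⟩, ?_⟩
  refine LinearMap.ext fun φ => funext fun T => ?_
  simp only [LinearMap.comp_apply, relabelMap_apply, diff, LinearMap.pi_apply,
    LinearMap.sum_apply, LinearMap.smul_apply, LinearMap.proj_apply, smul_sum, map_smul,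
    smul_smul, Function.comp_apply]
  exact sum_congr rfl fun e _ => by rw [pairSign_image_mul_neg_one_pow hπ k e.2]
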